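/- arXiv:1205.1778 — 5 statements merged into one kernel-verified Lean document; each statement's English description precedes it below -/
import Mathlib

section
/- For every integer k ≥ 3 and every positive integer n, the number of permutations of length n avoiding the pattern 12⋯k equals the number of permutations of length n avoiding the pattern 12⋯(k-2)k(k-1). -/
open Function

def Contains {n k : ℕ} (p : Fin n → Fin n) (q : Fin k → Fin k) : Prop :=
  ∃ f : Fin k → Fin n, StrictMono f ∧ ∀ a b : Fin k, q a < q b ↔ p (f a) < p (f b)

def Avoids {n k : ℕ} (p : Fin n → Fin n) (q : Fin k → Fin k) : Prop :=
  ¬ Contains p q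

noncomputable def rank {n : ℕ} (p : Fin n → Fin n) (i : Fin n) : ℕ :=
  sSup {m | ∃ f : Fin m → Fin n, StrictMono f ∧ StrictMono (p ∘ f) ∧
    ∃ hm : 0 < m, f ⟨m - 1, Nat.sub_lt hm Nat.one_pos⟩ = i}

noncomputable def corank {n : ℕ} (p : Fin n → Fin n) (i : Fin n) : ℕ :=
  sSup {m | ∃ f : Fin m → Fin n, StrictMono f ∧ StrictMono (p ∘ f) ∧
    ∃ hm : 0 < m, f ⟨0, hm⟩ = i}

def Alternating {n : ℕ} (p : Fin n → Fin n) : Prop :=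
  ∀ (i : ℕ) (h : i + 1 < n), p ⟨i, by omega⟩ < p ⟨i + 1, h⟩ ↔ i % 2 = 0

def IsPeak {n : ℕ} (p : Fin n → Fin n) (i : Fin n) : Prop :=
  (∀ _ : 0 < i.1, p ⟨i.1 - 1, lt_of_le_of_lt (Nat.sub_le _ _) i.2⟩ < p i) ∧
  (∀ h : i.1 + 1 < n, p ⟨i.1 + 1, h⟩ < p i)

def IsValley {n : ℕ} (p : Fin n → Fin n) (i : Fin n) : Prop :=
  (∀ _ : 0 < i.1, p i < p ⟨i.1 - 1, lt_of_le_of_lt (Nat.sub_le _ _) i.2⟩) ∧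
  (∀ h : i.1 + 1 < n, p i < p ⟨i.1 + 1, h⟩)

/-!
Call an entry of a permutation *high* if it ends an increasing subsequence of length `k - 1`.
Reassigning the values at the high positions so that each still exceeds the end of some
increasing subsequence of length `k - 2` to its left changes neither the set of high positions
nor these thresholds, so such "refills" form an equivalence relation. A permutation avoids
`12⋯k` iff every high entry exceeds all later entries, and avoids `12⋯(k-2)k(k-1)` iff no entry
exceeds a later entry lying above a threshold at the earlier position. In every class the refill
minimizing `∑ i, p i * i` is of the first kind and the one maximizing it of the second (an
offending pair can be swapped), and comparing two such refills at their first difference shows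
that each kind is unique in its class. For `k = 3` this is the Simion–Schmidt bijection.
-/

theorem Nat.card_eq_of_biTotal_biUnique {α β : Type*} {R : α → β → Prop}
    (hT : Relator.BiTotal R) (hU : Relator.BiUnique R) : Nat.card α = Nat.card β := by
  choose f hf using hT.1
  refine Nat.card_eq_of_bijective f ⟨fun a a' h => hU.1 (hf a) (h ▸ hf a'), fun b => ?_⟩
  obtain ⟨a, ha⟩ := hT.2 b
  exact ⟨a, hU.2 (hf a) ha⟩

theorem Fin.strictMono_snoc_iff {α : Type*} [Preorder α] {m : ℕ} {f : Fin (m + 1) → α}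
    {a : α} :
    StrictMono (Fin.snoc f a : Fin (m + 2) → α) ↔ StrictMono f ∧ f (Fin.last m) < a := by
  rw [Fin.strictMono_iff_lt_succ, Fin.strictMono_iff_lt_succ, Fin.forall_fin_succ']
  simp [Fin.succ_castSucc, -Fin.castSucc_succ]

theorem Fin.snoc_snoc_comp_swap {α : Type*} {m : ℕ} (g : Fin (m + 1) → α) (a b : α) :
    (Fin.snoc (Fin.snoc g a) b : Fin (m + 3) → α) ∘
        Equiv.swap (Fin.last (m + 1)).castSucc (Fin.last (m + 2)) =
      Fin.snoc (Fin.snoc g b) a := by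
  funext x
  induction x using Fin.lastCases with
  | last => simp
  | cast x =>
    induction x using Fin.lastCases with
    | last => simp
    | cast x =>
      rw [comp_apply, Equiv.swap_apply_of_ne_of_ne (by simp [Fin.castSucc_inj])
        (Fin.castSucc_ne_last _)]
      simp

section FirstDifference

variable {α β : Type*} [LinearOrder α] {p p' : α → β}

theorem exists_gt_apply_eq (hp : Injective p) (hp' : Surjective p') {j : α}
    (hj : p j ≠ p' j) (hagree : ∀ i < j, p i = p' i) : ∃ l, j < l ∧ p' l = p j := by
  obtain ⟨l, hl⟩ := hp' (p j)
  refine ⟨l, lt_of_not_ge fun hle => ?_, hl⟩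
  rcases hle.lt_or_eq with hlt | rfl
  · exact hlt.ne (hp (hl ▸ hagree l hlt))
  · exact hj hl.symm

theorem exists_first_ne [WellFoundedLT α] (hp : Bijective p) (hp' : Bijective p')
    (hne : p ≠ p') :
    ∃ j, p j ≠ p' j ∧ (∃ l, j < l ∧ p' l = p j) ∧ ∃ l, j < l ∧ p l = p' j := by
  obtain ⟨j, hj, hmin⟩ := wellFounded_lt.has_min {i | p i ≠ p' i} (Function.ne_iff.1 hne)
  have hagree : ∀ i < j, p i = p' i := fun i hi => not_not.1 fun h => hmin i h hi
  exact ⟨j, hj, exists_gt_apply_eq hp.1 hp'.2 hj hagree,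
    exists_gt_apply_eq hp'.1 hp.2 (Ne.symm hj) fun i hi => (hagree i hi).symm⟩

end FirstDifference

section Chains

variable {n : ℕ} (p : Fin n → Fin n)

/-- Position `i` ends an increasing subsequence of `p` of length `r + 1`. -/
def EndsChain : ℕ → Fin n → Prop
  | 0, _ => True
  | r + 1, i => ∃ i' < i, EndsChain r i' ∧ p i' < p i

def ChainBelow (r : ℕ) (j v : Fin n) : Prop :=
  ∃ i < j, EndsChain p r i ∧ p i < v

variable {p}

theorem EndsChain.mono {r s : ℕ} {i : Fin n} (h : EndsChain p s i) (hrs : r ≤ s) :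
    EndsChain p r i := by
  induction r generalizing s i with
  | zero => trivial
  | succ r ih =>
    obtain ⟨s, rfl⟩ : ∃ s', s = s' + 1 := ⟨s - 1, by omega⟩
    obtain ⟨i', hi', hchain, hlt⟩ := h
    exact ⟨i', hi', ih hchain (by omega), hlt⟩

theorem ChainBelow.mono {r s : ℕ} {j j' v v' : Fin n} (h : ChainBelow p s j v) (hrs : r ≤ s)
    (hj : j ≤ j') (hv : v ≤ v') : ChainBelow p r j' v' :=
  let ⟨i, hi, hchain, hlt⟩ := h
  ⟨i, hi.trans_le hj, hchain.mono hrs, hlt.trans_le hv⟩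

/- A witness ending a chain of length `t + 1` can be traded for an earlier one of smaller value. -/
theorem ChainBelow.exists_not_endsChain {r t : ℕ} (hrt : r < t) {j v : Fin n}
    (h : ChainBelow p r j v) : ∃ i < j, ¬ EndsChain p t i ∧ EndsChain p r i ∧ p i < v := by
  induction v using WellFoundedLT.induction generalizing j with
  | _ v ih =>
  obtain ⟨i, hij, hi, hiv⟩ := h
  by_cases ht : EndsChain p t i
  · obtain ⟨i', hi'i, hlow, hi', hlt⟩ := ih (p i) hiv (ht.mono hrt : ChainBelow p r i (p i))
    exact ⟨i', hi'i.trans hij, hlow, hi', hlt.trans hiv⟩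
  · exact ⟨i, hij, ht, hi, hiv⟩

theorem ChainBelow.of_agree {q : Fin n → Fin n} {r t : ℕ} (hrt : r < t) {j v : Fin n}
    (h : ChainBelow p r j v)
    (hagree : ∀ i < j, ¬ EndsChain p t i → EndsChain p r i → EndsChain q r i ∧ q i = p i) :
    ChainBelow q r j v := by
  obtain ⟨i, hij, hlow, hi, hiv⟩ := h.exists_not_endsChain hrt
  obtain ⟨hqi, heq⟩ := hagree i hij hlow hi
  exact ⟨i, hij, hqi, heq ▸ hiv⟩

theorem endsChain_iff_exists_strictMono {r : ℕ} {i : Fin n} :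
    EndsChain p r i ↔
      ∃ f : Fin (r + 1) → Fin n, StrictMono f ∧ StrictMono (p ∘ f) ∧ f (Fin.last r) = i := by
  induction r generalizing i with
  | zero =>
    exact iff_of_true trivial ⟨fun _ => i, Subsingleton.strictMono (α := Fin 1) _,
      Subsingleton.strictMono (α := Fin 1) _, rfl⟩
  | succ r ih =>
    simp only [EndsChain, ih]
    constructor
    · rintro ⟨_, hi', ⟨f, hf, hpf, rfl⟩, hlt⟩
      refine ⟨Fin.snoc f i, Fin.strictMono_snoc_iff.2 ⟨hf, hi'⟩, ?_, Fin.snoc_last _ _⟩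
      rw [Fin.comp_snoc]
      exact Fin.strictMono_snoc_iff.2 ⟨hpf, hlt⟩
    · rintro ⟨f, hf, hpf, rfl⟩
      induction f using Fin.snocCases with
      | snoc g a =>
      rw [Fin.comp_snoc, Fin.strictMono_snoc_iff] at hpf
      rw [Fin.strictMono_snoc_iff] at hf
      simp only [Fin.snoc_last]
      exact ⟨g (Fin.last r), hf.2, ⟨g, hf.1, hpf.1, rfl⟩, hpf.2⟩

end Chains

section Patterns

variable {n : ℕ} {p : Fin n → Fin n}

theorem contains_iff_exists_strictMono {k : ℕ} (σ : Equiv.Perm (Fin k)) :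
    Contains p σ ↔ ∃ f : Fin k → Fin n, StrictMono f ∧ StrictMono (p ∘ f ∘ σ.symm) := by
  refine exists_congr fun f => and_congr_right fun _ => ⟨fun h x y hxy => ?_, fun h a b => ?_⟩
  · exact (h _ _).1 (by simpa using hxy)
  · simpa using (h.lt_iff_lt (a := σ a) (b := σ b)).symm

theorem contains_id_iff {r : ℕ} :
    Contains p (id : Fin (r + 3) → Fin (r + 3)) ↔
      ∃ j l, j < l ∧ EndsChain p (r + 1) j ∧ p j < p l := by
  rw [← Equiv.coe_refl, contains_iff_exists_strictMono]
  simp only [Equiv.refl_symm, Equiv.coe_refl, comp_id]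
  constructor
  · rintro ⟨f, hf, hpf⟩
    obtain ⟨j, hjl, hj, hlt⟩ := endsChain_iff_exists_strictMono.2 ⟨f, hf, hpf, rfl⟩
    exact ⟨j, _, hjl, hj, hlt⟩
  · rintro ⟨j, l, hjl, hj, hlt⟩
    obtain ⟨f, hf, hpf, -⟩ :=
      (endsChain_iff_exists_strictMono (r := r + 2) (i := l)).1 ⟨j, hjl, hj, hlt⟩
    exact ⟨f, hf, hpf⟩

theorem contains_swap_iff {r : ℕ} :
    Contains p (Equiv.swap (Fin.last (r + 1)).castSucc (Fin.last (r + 2)) :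
        Fin (r + 3) → Fin (r + 3)) ↔
      ∃ j l, j < l ∧ ChainBelow p r j (p l) ∧ p l < p j := by
  rw [contains_iff_exists_strictMono, Equiv.symm_swap]
  constructor
  · rintro ⟨f, hf, hpf⟩
    induction f using Fin.snocCases with
    | snoc f l =>
    induction f using Fin.snocCases with
    | snoc g j =>
    simp only [Fin.snoc_snoc_comp_swap, Fin.comp_snoc, Fin.strictMono_snoc_iff, Fin.snoc_last,
      comp_apply] at hf hpf
    exact ⟨j, l, hf.2, ⟨_, hf.1.2, endsChain_iff_exists_strictMono.2 ⟨g, hf.1.1, hpf.1.1, rfl⟩,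
      hpf.1.2⟩, hpf.2⟩
  · rintro ⟨j, l, hjl, ⟨_, hij, hi, hil⟩, hlj⟩
    obtain ⟨g, hg, hpg, rfl⟩ := endsChain_iff_exists_strictMono.1 hi
    refine ⟨Fin.snoc (Fin.snoc g j) l, ?_, ?_⟩
    · simp only [Fin.strictMono_snoc_iff, Fin.snoc_last]
      exact ⟨⟨hg, hij⟩, hjl⟩
    · simp only [Fin.snoc_snoc_comp_swap, Fin.comp_snoc, Fin.strictMono_snoc_iff, Fin.snoc_last,
        comp_apply]
      exact ⟨⟨hpg, hil⟩, hlj⟩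

end Patterns

section Refill

variable {n : ℕ}

structure IsRefill (r : ℕ) (q p : Fin n → Fin n) : Prop where
  eq_of_not_endsChain : ∀ i, ¬ EndsChain q (r + 1) i → p i = q i
  chainBelow_of_endsChain : ∀ i, EndsChain q (r + 1) i → ChainBelow q r i (p i)

namespace IsRefill

variable {r : ℕ} {q p p' : Fin n → Fin n}

theorem chainBelow_iff_of_forall_lt (h : IsRefill r q p) {s : ℕ} (hs : s ≤ r) {j : Fin n}
    (hj : ∀ i < j, ∀ t ≤ r + 1, EndsChain p t i ↔ EndsChain q t i) (v : Fin n) :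
    ChainBelow p s j v ↔ ChainBelow q s j v := by
  have hst : s < r + 1 := Nat.lt_succ_of_le hs
  refine ⟨fun hp => hp.of_agree hst fun i hi hlow hchain => ?_,
    fun hq => hq.of_agree hst fun i hi hlow hchain =>
      ⟨(hj i hi s hst.le).2 hchain, h.eq_of_not_endsChain i hlow⟩⟩
  have hlow' : ¬ EndsChain q (r + 1) i := by rwa [← hj i hi _ le_rfl]
  exact ⟨(hj i hi s hst.le).1 hchain, (h.eq_of_not_endsChain i hlow').symm⟩

theorem endsChain_iff (h : IsRefill r q p) {s : ℕ} (hs : s ≤ r + 1) (i : Fin n) :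
    EndsChain p s i ↔ EndsChain q s i := by
  induction i using WellFoundedLT.induction generalizing s with
  | _ i ih =>
  cases s with
  | zero => exact Iff.rfl
  | succ s =>
    have hs' : s ≤ r := by omega
    calc EndsChain p (s + 1) i ↔ ChainBelow q s i (p i) :=
          h.chainBelow_iff_of_forall_lt hs' (fun i' hi' _ ht => ih i' hi' ht) (p i)
      _ ↔ ChainBelow q s i (q i) := by
        by_cases hi : EndsChain q (r + 1) i
        · exact iff_of_true ((h.chainBelow_of_endsChain i hi).mono hs' le_rfl le_rfl)
            (hi.mono (by omega : s + 1 ≤ r + 1))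
        · rw [h.eq_of_not_endsChain i hi]

theorem chainBelow_iff (h : IsRefill r q p) {s : ℕ} (hs : s ≤ r) (j v : Fin n) :
    ChainBelow p s j v ↔ ChainBelow q s j v :=
  h.chainBelow_iff_of_forall_lt hs (fun i _ _ ht => h.endsChain_iff ht i) v

theorem refl (r : ℕ) (q : Fin n → Fin n) : IsRefill r q q :=
  ⟨fun _ _ => rfl, fun _ hi => hi⟩

theorem symm (h : IsRefill r q p) : IsRefill r p q where
  eq_of_not_endsChain i hi :=
    (h.eq_of_not_endsChain i (by rwa [← h.endsChain_iff le_rfl])).symm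
  chainBelow_of_endsChain i hi :=
    (h.chainBelow_iff le_rfl i (q i)).2 ((h.endsChain_iff le_rfl i).1 hi)

theorem trans (h₁ : IsRefill r q p) (h₂ : IsRefill r p p') : IsRefill r q p' where
  eq_of_not_endsChain i hi := by
    rw [h₂.eq_of_not_endsChain i (by rwa [h₁.endsChain_iff le_rfl]),
      h₁.eq_of_not_endsChain i hi]
  chainBelow_of_endsChain i hi :=
    (h₁.chainBelow_iff le_rfl i _).1
      (h₂.chainBelow_of_endsChain i ((h₁.endsChain_iff le_rfl i).2 hi))

theorem comp_swap {j l : Fin n} (hj : EndsChain p (r + 1) j) (hl : EndsChain p (r + 1) l)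
    (hjl : ChainBelow p r j (p l)) (hlj : ChainBelow p r l (p j)) :
    IsRefill r p (p ∘ Equiv.swap j l) where
  eq_of_not_endsChain i hi := by
    rw [comp_apply, Equiv.swap_apply_of_ne_of_ne (by rintro rfl; exact hi hj)
      (by rintro rfl; exact hi hl)]
  chainBelow_of_endsChain i hi := by
    rcases eq_or_ne i j with rfl | hij
    · simpa using hjl
    rcases eq_or_ne i l with rfl | hil
    · simpa using hlj
    rwa [comp_apply, Equiv.swap_apply_of_ne_of_ne hij hil]

end IsRefill

end Refill

section Extremal

variable {n r : ℕ} {q p p' : Fin n → Fin n}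

def weight (p : Fin n → Fin n) : ℤ :=
  ∑ i, ((p i : ℕ) : ℤ) * (i : ℕ)

theorem weight_comp_swap_lt {j l : Fin n} (hjl : j < l) (hp : p j < p l) :
    weight (p ∘ Equiv.swap j l) < weight p := by
  have key : weight p - weight (p ∘ Equiv.swap j l) =
      (((p l : ℕ) : ℤ) - (p j : ℕ)) * (((l : ℕ) : ℤ) - (j : ℕ)) := by
    rw [weight, weight, ← Finset.sum_sub_distrib, Fintype.sum_eq_add j l hjl.ne]
    · simp only [comp_apply, Equiv.swap_apply_left, Equiv.swap_apply_right]
      ring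
    · rintro i ⟨hij, hil⟩
      simp [Equiv.swap_apply_of_ne_of_ne hij hil]
  have : 0 < (((p l : ℕ) : ℤ) - (p j : ℕ)) * (((l : ℕ) : ℤ) - (j : ℕ)) :=
    mul_pos (sub_pos.2 (by exact_mod_cast hp)) (sub_pos.2 (by exact_mod_cast hjl))
  linarith

theorem exists_isRefill_forall_endsChain (hq : Bijective q) (r : ℕ) :
    ∃ p, Bijective p ∧ IsRefill r q p ∧ ∀ j l, j < l → EndsChain p (r + 1) j → p l ≤ p j := by
  have : Nonempty {p // Bijective p ∧ IsRefill r q p} := ⟨⟨q, hq, IsRefill.refl r q⟩⟩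
  obtain ⟨⟨p, hp, hqp⟩, hmin⟩ :=
    Finite.exists_min fun p : {p // Bijective p ∧ IsRefill r q p} => weight p.1
  refine ⟨p, hp, hqp, fun j l hjl hj => not_lt.1 fun hlt => ?_⟩
  have hl : EndsChain p (r + 1) l := ChainBelow.mono hj le_rfl hjl.le hlt.le
  have hswap := hqp.trans (IsRefill.comp_swap hj hl (ChainBelow.mono hj le_rfl le_rfl hlt.le)
    (ChainBelow.mono hj le_rfl hjl.le le_rfl))
  exact (hmin ⟨_, hp.comp (Equiv.bijective _), hswap⟩).not_gt (weight_comp_swap_lt hjl hlt)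

theorem exists_isRefill_forall_chainBelow (hq : Bijective q) (r : ℕ) :
    ∃ p, Bijective p ∧ IsRefill r q p ∧ ∀ j l, j < l → ChainBelow p r j (p l) → p j ≤ p l := by
  have : Nonempty {p // Bijective p ∧ IsRefill r q p} := ⟨⟨q, hq, IsRefill.refl r q⟩⟩
  obtain ⟨⟨p, hp, hqp⟩, hmax⟩ :=
    Finite.exists_max fun p : {p // Bijective p ∧ IsRefill r q p} => weight p.1
  refine ⟨p, hp, hqp, fun j l hjl hb => not_lt.1 fun hlt => ?_⟩
  have hj : EndsChain p (r + 1) j := hb.mono le_rfl le_rfl hlt.le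
  have hl : EndsChain p (r + 1) l := hb.mono le_rfl hjl.le le_rfl
  have hswap := hqp.trans (IsRefill.comp_swap hj hl hb (hb.mono le_rfl hjl.le hlt.le))
  have hlt' : weight p < weight (p ∘ Equiv.swap j l) := by
    simpa [comp_def, Equiv.swap_apply_self] using
      weight_comp_swap_lt (p := p ∘ Equiv.swap j l) hjl (by simpa using hlt)
  exact (hmax ⟨_, hp.comp (Equiv.bijective _), hswap⟩).not_gt hlt'

namespace IsRefill

theorem endsChain_of_ne (h : IsRefill r p p') {j : Fin n} (hj : p j ≠ p' j) :
    EndsChain p (r + 1) j :=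
  not_not.1 fun hlow => hj (h.eq_of_not_endsChain j hlow).symm

theorem eq_of_forall_endsChain (h : IsRefill r p p') (hp : Bijective p) (hp' : Bijective p')
    (hA : ∀ j l, j < l → EndsChain p (r + 1) j → p l ≤ p j)
    (hA' : ∀ j l, j < l → EndsChain p' (r + 1) j → p' l ≤ p' j) : p = p' := by
  by_contra hne
  obtain ⟨j, hj, ⟨l', hjl', hl'⟩, l, hjl, hl⟩ := exists_first_ne hp hp' hne
  have hhigh := h.endsChain_of_ne hj
  rcases hj.lt_or_gt with hlt | hlt
  · exact (hA j l hjl hhigh).not_gt (hl ▸ hlt)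
  · exact (hA' j l' hjl' ((h.endsChain_iff le_rfl j).2 hhigh)).not_gt (hl' ▸ hlt)

theorem eq_of_forall_chainBelow (h : IsRefill r p p') (hp : Bijective p) (hp' : Bijective p')
    (hB : ∀ j l, j < l → ChainBelow p r j (p l) → p j ≤ p l)
    (hB' : ∀ j l, j < l → ChainBelow p' r j (p' l) → p' j ≤ p' l) : p = p' := by
  by_contra hne
  obtain ⟨j, hj, ⟨l', hjl', hl'⟩, l, hjl, hl⟩ := exists_first_ne hp hp' hne
  have hhigh : ChainBelow p r j (p j) := h.endsChain_of_ne hj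
  have hhigh' : ChainBelow p' r j (p' j) := (h.endsChain_iff le_rfl j).2 hhigh
  rcases hj.lt_or_gt with hlt | hlt
  · have hbelow : ChainBelow p' r j (p' l') := hl' ▸ (h.chainBelow_iff le_rfl j (p j)).2 hhigh
    exact (hB' j l' hjl' hbelow).not_gt (hl' ▸ hlt)
  · have hbelow : ChainBelow p r j (p l) := hl ▸ (h.chainBelow_iff le_rfl j (p' j)).1 hhigh'
    exact (hB j l hjl hbelow).not_gt (hl ▸ hlt)

end IsRefill

end Extremal

theorem stmt3 (k n : ℕ) (hk : 3 ≤ k) :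
    Nat.card {p : Fin n → Fin n // Function.Bijective p ∧ Avoids p (id : Fin k → Fin k)} =
    Nat.card {p : Fin n → Fin n // Function.Bijective p ∧
      Avoids p ⇑(Equiv.swap (⟨k - 2, by omega⟩ : Fin k) ⟨k - 1, by omega⟩)} := by
  obtain ⟨r, rfl⟩ : ∃ r, k = r + 3 := ⟨k - 3, by omega⟩
  have hswap : Equiv.swap (⟨r + 3 - 2, by omega⟩ : Fin (r + 3)) ⟨r + 3 - 1, by omega⟩ =
      Equiv.swap (Fin.last (r + 1)).castSucc (Fin.last (r + 2)) := rfl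
  simp only [hswap, Avoids, contains_id_iff, contains_swap_iff, not_exists, not_and, not_lt]
  refine Nat.card_eq_of_biTotal_biUnique (R := fun p q => IsRefill r p.1 q.1)
    ⟨fun p => ?_, fun q => ?_⟩ ⟨fun p p' q hpq hp'q => ?_, fun p q q' hpq hpq' => ?_⟩
  · obtain ⟨q, hq, hpq, hB⟩ := exists_isRefill_forall_chainBelow p.2.1 r
    exact ⟨⟨q, hq, hB⟩, hpq⟩
  · obtain ⟨p, hp, hqp, hA⟩ := exists_isRefill_forall_endsChain q.2.1 r
    exact ⟨⟨p, hp, hA⟩, hqp.symm⟩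
  · exact Subtype.ext ((hpq.trans hp'q.symm).eq_of_forall_endsChain p.2.1 p'.2.1 p.2.2 p'.2.2)
  · exact Subtype.ext ((hpq.symm.trans hpq').eq_of_forall_chainBelow q.2.1 q'.2.1 q.2.2 q'.2.2)
end

section
/- Let n be even and let p be an alternating permutation of length n avoiding the pattern 12⋯k. Then every entry of p of rank k-1 is a peak of p. -/
/-!
If an entry `p i` of rank `k - 1` were followed by an ascent `p i < p (i + 1)`, appending `i + 1`
to a longest increasing subsequence ending at `i` would produce an increasing subsequence of
length `k`. In an alternating permutation of even length every entry at an even (0-based) position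
is followed by an ascent, so an entry of rank `k - 1` sits at an odd position, which is a peak.
-/

open Function

theorem Fin.strictMono_snoc {α : Type*} [Preorder α] {m : ℕ} {f : Fin m → α} (hf : StrictMono f)
    {x : α} (hx : ∀ a, f a < x) : StrictMono (Fin.snoc (α := fun _ ↦ α) f x) := by
  intro a b hab
  obtain ⟨a, rfl⟩ | rfl := a.eq_castSucc_or_eq_last
  · obtain ⟨b, rfl⟩ | rfl := b.eq_castSucc_or_eq_last
    · simpa only [Fin.snoc_castSucc] using hf (Fin.castSucc_lt_castSucc_iff.mp hab)
    · simpa only [Fin.snoc_castSucc, Fin.snoc_last] using hx a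
  · exact absurd hab (Fin.le_last b).not_gt

section Rank

variable {n : ℕ} (p : Fin n → Fin n)

def rankSet (i : Fin n) : Set ℕ :=
  {m | ∃ f : Fin m → Fin n, StrictMono f ∧ StrictMono (p ∘ f) ∧
    ∃ hm : 0 < m, f ⟨m - 1, Nat.sub_lt hm Nat.one_pos⟩ = i}

theorem bddAbove_rankSet (i : Fin n) : BddAbove (rankSet p i) := by
  refine ⟨n, fun m ⟨f, hf, _⟩ ↦ ?_⟩
  simpa using Fintype.card_le_of_injective f hf.injective

theorem one_mem_rankSet (i : Fin n) : 1 ∈ rankSet p i :=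
  ⟨fun _ ↦ i, Subsingleton.strictMono _, Subsingleton.strictMono _, Nat.one_pos, rfl⟩

theorem rank_mem_rankSet (i : Fin n) : rank p i ∈ rankSet p i :=
  Nat.sSup_mem ⟨1, one_mem_rankSet p i⟩ (bddAbove_rankSet p i)

theorem le_rank {i : Fin n} {m : ℕ} (f : Fin (m + 1) → Fin n) (hf : StrictMono f)
    (hpf : StrictMono (p ∘ f)) (hlast : f (Fin.last m) = i) : m + 1 ≤ rank p i :=
  le_csSup (bddAbove_rankSet p i) ⟨f, hf, hpf, m.succ_pos, hlast⟩

theorem rank_lt_rank {i j : Fin n} (hij : i < j) (hpij : p i < p j) : rank p i < rank p j := by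
  obtain ⟨f, hf, hpf, hpos, hlast⟩ := rank_mem_rankSet p i
  have le_last : ∀ a : Fin (rank p i), a ≤ ⟨rank p i - 1, Nat.sub_lt hpos Nat.one_pos⟩ :=
    fun a ↦ Fin.mk_le_mk.mpr (by omega)
  refine le_rank p (Fin.snoc (α := fun _ ↦ Fin n) f j) ?_ ?_ (Fin.snoc_last _ _)
  · exact Fin.strictMono_snoc hf fun a ↦
      ((hf.monotone (le_last a)).trans_eq hlast).trans_lt hij
  · rw [Fin.comp_snoc]
    exact Fin.strictMono_snoc hpf fun a ↦
      ((hpf.monotone (le_last a)).trans_eq (congrArg p hlast)).trans_lt hpij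

theorem contains_id_of_le_rank {k : ℕ} {i : Fin n} (hk : k ≤ rank p i) :
    Contains p (id : Fin k → Fin k) := by
  obtain ⟨f, hf, hpf, -⟩ := rank_mem_rankSet p i
  have hcast := Fin.strictMono_castLE hk
  exact ⟨f ∘ Fin.castLE hk, hf.comp hcast, fun a b ↦ (hpf.comp hcast).lt_iff_lt.symm⟩

end Rank

theorem Alternating.isPeak_of_odd {n : ℕ} {p : Fin n → Fin n} (halt : Alternating p)
    (hinj : Injective p) {i : Fin n} (hi : i.1 % 2 = 1) : IsPeak p i := by
  refine ⟨fun hpos ↦ ?_, fun hsucc ↦ ?_⟩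
  · have hprev := (halt (i.1 - 1) (by omega)).mpr (by omega)
    rwa [show (⟨i.1 - 1 + 1, _⟩ : Fin n) = i from Fin.ext (Nat.sub_add_cancel hpos)] at hprev
  · have hne : p ⟨i.1 + 1, hsucc⟩ ≠ p i := hinj.ne (Fin.ne_of_val_ne (by simp))
    have hle : p ⟨i.1 + 1, hsucc⟩ ≤ p i :=
      not_lt.mp fun h ↦ absurd ((halt i.1 hsucc).mp h) (by omega)
    exact hle.lt_of_ne hne

theorem stmt5 (n k : ℕ) (hn : Even n) (p : Fin n → Fin n) (hp : Function.Bijective p)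
    (halt : Alternating p) (hav : Avoids p (id : Fin k → Fin k))
    (i : Fin n) (hr : rank p i = k - 1) : IsPeak p i := by
  refine halt.isPeak_of_odd hp.injective ?_
  by_contra heven
  have hsucc : i.1 + 1 < n := by obtain ⟨m, rfl⟩ := hn; omega
  have hrank := rank_lt_rank p (i := i) (j := ⟨i.1 + 1, hsucc⟩) (Fin.lt_def.mpr (by simp))
    ((halt i.1 hsucc).mpr (by omega))
  exact hav (contains_id_of_le_rank p (i := ⟨i.1 + 1, hsucc⟩) (by omega))
end

section
/- Let p be an alternating permutation (of any length n) avoiding the pattern 12⋯k. Then every entry of p of co-rank k-1 is a valley of p. -/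
open Function

/-! If `i` had an odd (0-based) index, its left neighbour would be smaller, and prepending it to a
longest increasing subsequence starting at `i` gives an increasing subsequence of length `k`,
i.e. an occurrence of `12⋯k`. So `i` has an even index, and these are the valleys of an
alternating permutation. -/

section Corank

variable {n : ℕ} (p : Fin n → Fin n)

def HasIncreasingSubseqFrom (i : Fin n) (m : ℕ) : Prop :=
  ∃ f : Fin m → Fin n, StrictMono f ∧ StrictMono (p ∘ f) ∧
    ∃ hm : 0 < m, f ⟨0, hm⟩ = i

variable {p} {k : ℕ}

theorem hasIncreasingSubseqFrom_one (i : Fin n) : HasIncreasingSubseqFrom p i 1 :=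
  ⟨fun _ => i, Subsingleton.strictMono _, Subsingleton.strictMono _, Nat.one_pos, rfl⟩

theorem HasIncreasingSubseqFrom.lt_of_avoids (hav : Avoids p (id : Fin k → Fin k))
    {i : Fin n} {m : ℕ} (h : HasIncreasingSubseqFrom p i m) : m < k := by
  obtain ⟨f, hf, hpf, -⟩ := h
  by_contra! hkm
  have hcast := Fin.strictMono_castLE hkm
  exact hav ⟨f ∘ Fin.castLE hkm, hf.comp hcast,
    fun a b => ((hpf.comp hcast).lt_iff_lt).symm⟩

theorem HasIncreasingSubseqFrom.cons {i j : Fin n} {m : ℕ} (hji : j < i) (hpji : p j < p i)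
    (h : HasIncreasingSubseqFrom p i m) : HasIncreasingSubseqFrom p j (m + 1) := by
  obtain ⟨f, hf, hpf, hm, rfl⟩ := h
  have hzero : ∀ t : Fin m, ⟨0, hm⟩ ≤ t := fun t => Fin.le_def.2 (Nat.zero_le _)
  have hfirst : ∀ t, f ⟨0, hm⟩ ≤ f t := fun t => hf.monotone (hzero t)
  have hpfirst : ∀ t, p (f ⟨0, hm⟩) ≤ p (f t) := fun t => hpf.monotone (hzero t)
  refine ⟨Fin.cons j f, Fin.strictMono_cons.2 ⟨fun t => hji.trans_le (hfirst t), hf⟩, ?_,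
    Nat.succ_pos m, rfl⟩
  rw [Fin.comp_cons]
  exact Fin.strictMono_cons.2 ⟨fun t => hpji.trans_le (hpfirst t), hpf⟩

theorem bddAbove_hasIncreasingSubseqFrom (hav : Avoids p (id : Fin k → Fin k)) (i : Fin n) :
    BddAbove {m | HasIncreasingSubseqFrom p i m} :=
  ⟨k, fun _ hm => (HasIncreasingSubseqFrom.lt_of_avoids hav hm).le⟩

theorem hasIncreasingSubseqFrom_corank (hav : Avoids p (id : Fin k → Fin k)) (i : Fin n) :
    HasIncreasingSubseqFrom p i (corank p i) :=
  Nat.sSup_mem ⟨1, hasIncreasingSubseqFrom_one i⟩ (bddAbove_hasIncreasingSubseqFrom hav i)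

theorem corank_lt_of_avoids (hav : Avoids p (id : Fin k → Fin k)) (i : Fin n) : corank p i < k :=
  (hasIncreasingSubseqFrom_corank hav i).lt_of_avoids hav

theorem corank_lt_corank (hav : Avoids p (id : Fin k → Fin k)) {i j : Fin n} (hji : j < i)
    (hpji : p j < p i) : corank p i < corank p j :=
  le_csSup (bddAbove_hasIncreasingSubseqFrom hav j)
    ((hasIncreasingSubseqFrom_corank hav i).cons hji hpji)

end Corank

section Alternating

variable {n : ℕ} {p : Fin n → Fin n}

theorem Alternating.pred_lt_of_odd (halt : Alternating p) (i : Fin n) (hi : i.1 % 2 = 1) :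
    p ⟨i.1 - 1, by omega⟩ < p i := by
  have h := (halt (i.1 - 1) (by omega)).2 (by omega)
  rwa [show (⟨i.1 - 1 + 1, _⟩ : Fin n) = i from Fin.ext (by simp only; omega)] at h

theorem Alternating.isValley_of_even (halt : Alternating p) (hinj : Injective p) (i : Fin n)
    (hi : i.1 % 2 = 0) : IsValley p i := by
  refine ⟨fun hpos => ?_, fun h => (halt i.1 h).2 hi⟩
  have hnot := mt (halt (i.1 - 1) (by omega)).1 (by omega)
  rw [show (⟨i.1 - 1 + 1, _⟩ : Fin n) = i from Fin.ext (by simp only; omega), not_lt] at hnot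
  exact hnot.lt_of_ne fun h => absurd (congrArg Fin.val (hinj h)) (by simp only; omega)

end Alternating

theorem stmt7 (n k : ℕ) (p : Fin n → Fin n) (hp : Function.Bijective p)
    (halt : Alternating p) (hav : Avoids p (id : Fin k → Fin k))
    (i : Fin n) (hr : corank p i = k - 1) : IsValley p i := by
  refine halt.isValley_of_even hp.injective i ?_
  by_contra hodd
  have hpred : (⟨i.1 - 1, by omega⟩ : Fin n) < i := Fin.lt_def.2 (by simp only; omega)
  have hlt := corank_lt_corank hav hpred (halt.pred_lt_of_odd i (by omega))
  have := corank_lt_of_avoids hav ⟨i.1 - 1, by omega⟩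
  omega
end

section
/- For every positive integer n, the number of alternating permutations of length 2n avoiding 1234 equals the number of alternating permutations of length 2n avoiding 1243. -/
open Function

/-!
Call the entry at position `i` of `p` high-rank if it ends an increasing subsequence of length
three, and let `q` rearrange `p` if both have the same high-rank positions and agree everywhere
else. Whether an increasing pair lies before a position and below a value depends only on the
entries of low rank, so a class of rearrangements is closed under swapping the entries at positions
`c < d` whenever `c` is high-rank and the entry moved to `c` stays high-rank there. Hence the
lexicographically largest member of a class avoids 1234 (a high-rank entry followed by a larger one)
and the smallest avoids 1243; comparing at the first difference shows that a 1234-avoider is the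
largest and a 1243-avoider the smallest, so each class contains exactly one of each. In an
alternating permutation of even length avoiding either pattern, the high-rank entries sit at peaks,
and then every rearrangement is alternating too.
-/

namespace PatternAvoidance

variable {m : ℕ}

def AscentBelow (p : Fin m → Fin m) (t v : Fin m) : Prop :=
  ∃ a b, a < b ∧ b < t ∧ p a < p b ∧ p b < v

-- `HighRank p i` says `3 ≤ rank p i`.
def HighRank (p : Fin m → Fin m) (i : Fin m) : Prop := AscentBelow p i (p i)

variable {p q : Fin m → Fin m}

theorem AscentBelow.mono {t v t' v' : Fin m} (h : AscentBelow p t v) (ht : t ≤ t')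
    (hv : v ≤ v') : AscentBelow p t' v' :=
  let ⟨a, b, hab, hbt, h₁, h₂⟩ := h
  ⟨a, b, hab, hbt.trans_le ht, h₁, h₂.trans_le hv⟩

theorem contains_iff_exists_strictMono_comp {k : ℕ} {π σ : Fin k → Fin k}
    (h₁ : LeftInverse σ π) (h₂ : RightInverse σ π) :
    Contains p π ↔ ∃ f : Fin k → Fin m, StrictMono f ∧ StrictMono (p ∘ f ∘ σ) := by
  constructor
  · rintro ⟨f, hf, hπ⟩
    refine ⟨f, hf, fun a b hab => (hπ (σ a) (σ b)).1 ?_⟩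
    rwa [h₂ a, h₂ b]
  · rintro ⟨f, hf, hpf⟩
    refine ⟨f, hf, fun a b => ?_⟩
    simpa only [comp_apply, h₁ a, h₁ b] using (hpf.lt_iff_lt (a := π a) (b := π b)).symm

theorem contains_1234_iff :
    Contains p ![0, 1, 2, 3] ↔ ∃ c d, c < d ∧ HighRank p c ∧ p c < p d := by
  rw [contains_iff_exists_strictMono_comp (σ := id) (by decide) (by decide)]
  constructor
  · rintro ⟨f, hf, hpf⟩
    exact ⟨f 2, f 3, hf (by decide), ⟨f 0, f 1, hf (by decide), hf (by decide),
      hpf (a := 0) (b := 1) (by decide), hpf (a := 1) (b := 2) (by decide)⟩,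
      hpf (a := 2) (b := 3) (by decide)⟩
  · rintro ⟨c, d, hcd, ⟨a, b, hab, hbc, h₁, h₂⟩, h₃⟩
    refine ⟨![a, b, c, d], ?_, ?_⟩
    · simp [strictMono_vecCons, hab, hbc, hcd]
    · simp [Fin.strictMono_iff_lt_succ, Fin.forall_fin_succ, h₁, h₂, h₃]

theorem contains_1243_iff :
    Contains p ![0, 1, 3, 2] ↔ ∃ c d, c < d ∧ p d < p c ∧ AscentBelow p c (p d) := by
  rw [contains_iff_exists_strictMono_comp (σ := ![0, 1, 3, 2]) (by decide) (by decide)]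
  constructor
  · rintro ⟨f, hf, hpf⟩
    exact ⟨f 2, f 3, hf (by decide), hpf (a := 2) (b := 3) (by decide),
      ⟨f 0, f 1, hf (by decide), hf (by decide),
      hpf (a := 0) (b := 1) (by decide), hpf (a := 1) (b := 2) (by decide)⟩⟩
  · rintro ⟨c, d, hcd, h₃, ⟨a, b, hab, hbc, h₁, h₂⟩⟩
    refine ⟨![a, b, c, d], ?_, ?_⟩
    · simp [strictMono_vecCons, hab, hbc, hcd]
    · simp [Fin.strictMono_iff_lt_succ, Fin.forall_fin_succ, h₁, h₂, h₃]

theorem AscentBelow.exists_not_highRank {t v : Fin m} (h : AscentBelow p t v) :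
    ∃ a b, a < b ∧ b < t ∧ p a < p b ∧ p b < v ∧ ¬ HighRank p a ∧ ¬ HighRank p b := by
  classical
  obtain ⟨b, hb, hmin⟩ :=
    Finset.exists_min_image {b | ∃ a, a < b ∧ b < t ∧ p a < p b ∧ p b < v} p
      (let ⟨a, b, h⟩ := h; ⟨b, by simpa using ⟨a, h⟩⟩)
  simp only [Finset.mem_filter, Finset.mem_univ, true_and] at hb hmin
  obtain ⟨a, hab, hbt, h₁, h₂⟩ := hb
  refine ⟨a, b, hab, hbt, h₁, h₂, ?_, ?_⟩
  · rintro ⟨a', b', hab', hb'a, h₁', h₂'⟩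
    exact (hmin b' ⟨a', hab', (hb'a.trans hab).trans hbt, h₁', h₂'.trans (h₁.trans h₂)⟩)
      |>.not_gt (h₂'.trans h₁)
  · rintro ⟨a', b', hab', hb'b, h₁', h₂'⟩
    exact (hmin b' ⟨a', hab', hb'b.trans hbt, h₁', h₂'.trans h₂⟩).not_gt h₂'

theorem AscentBelow.of_eq_of_not_highRank {t v : Fin m} (h : AscentBelow p t v)
    (hq : ∀ i, ¬ HighRank p i → q i = p i) : AscentBelow q t v := by
  obtain ⟨a, b, hab, hbt, h₁, h₂, ha, hb⟩ := h.exists_not_highRank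
  exact ⟨a, b, hab, hbt, by rwa [hq a ha, hq b hb], by rwa [hq b hb]⟩

structure Rearranges (p q : Fin m → Fin m) : Prop where
  eq_of_not_highRank : ∀ i, ¬ HighRank p i → q i = p i
  highRank : ∀ i, HighRank p i → HighRank q i

namespace Rearranges

theorem refl (p : Fin m → Fin m) : Rearranges p p :=
  ⟨fun _ _ => rfl, fun _ => id⟩

variable {r : Fin m → Fin m}

theorem ascentBelow_iff (h : Rearranges p q) {t v : Fin m} :
    AscentBelow q t v ↔ AscentBelow p t v :=
  ⟨fun hq => hq.of_eq_of_not_highRank fun i hi =>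
      (h.eq_of_not_highRank i fun hp => hi (h.highRank i hp)).symm,
    fun hp => hp.of_eq_of_not_highRank h.eq_of_not_highRank⟩

theorem highRank_iff (h : Rearranges p q) (i : Fin m) : HighRank q i ↔ HighRank p i := by
  refine ⟨fun hq => by_contra fun hp => hp ?_, h.highRank i⟩
  rw [HighRank, h.eq_of_not_highRank i hp] at hq
  exact h.ascentBelow_iff.1 hq

theorem symm (h : Rearranges p q) : Rearranges q p :=
  ⟨fun i hi => (h.eq_of_not_highRank i ((h.highRank_iff i).not.1 hi)).symm,
    fun i hi => (h.highRank_iff i).1 hi⟩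

theorem trans (h₁ : Rearranges p q) (h₂ : Rearranges q r) : Rearranges p r :=
  ⟨fun i hi => (h₂.eq_of_not_highRank i ((h₁.highRank_iff i).not.2 hi)).trans
      (h₁.eq_of_not_highRank i hi),
    fun i hi => h₂.highRank i (h₁.highRank i hi)⟩

theorem comp_swap (h : Rearranges p q) {c d : Fin m} (hcd : c ≤ d) (hc : HighRank q c)
    (hasc : AscentBelow q c (q d)) : Rearranges p (q ∘ Equiv.swap c d) := by
  have hd : HighRank q d := hasc.mono hcd le_rfl
  have hfix : ∀ i, ¬ HighRank q i → (q ∘ Equiv.swap c d) i = q i := fun i hi => by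
    rw [comp_apply, Equiv.swap_apply_of_ne_of_ne (by rintro rfl; exact hi hc)
      (by rintro rfl; exact hi hd)]
  refine ⟨fun i hi => (hfix i ((h.highRank_iff i).not.2 hi)).trans
      (h.eq_of_not_highRank i hi), fun i hi => ?_⟩
  refine AscentBelow.of_eq_of_not_highRank ?_ hfix
  rcases eq_or_ne i c with rfl | hic
  · simpa [HighRank] using hasc
  rcases eq_or_ne i d with rfl | hid
  · simpa [HighRank] using hc.mono hcd le_rfl
  · simpa [HighRank, Equiv.swap_apply_of_ne_of_ne hic hid] using h.highRank i hi

end Rearranges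

theorem exists_rearranges_avoids_1243 (hp : Bijective p) :
    ∃ q, Bijective q ∧ Rearranges p q ∧ Avoids q ![0, 1, 3, 2] := by
  classical
  obtain ⟨q, hq, hmin⟩ := Finset.exists_min_image {q | Bijective q ∧ Rearranges p q} toLex
    ⟨p, Finset.mem_filter.2 ⟨Finset.mem_univ _, hp, Rearranges.refl p⟩⟩
  simp only [Finset.mem_filter, Finset.mem_univ, true_and] at hq hmin
  refine ⟨q, hq.1, hq.2, fun hcon => ?_⟩
  obtain ⟨c, d, hcd, hdc, hasc⟩ := contains_1243_iff.1 hcon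
  exact (Pi.lex_desc hcd.le hdc).not_ge (hmin _ ⟨hq.1.comp (Equiv.bijective _),
    hq.2.comp_swap hcd.le (hasc.mono le_rfl hdc.le) hasc⟩)

theorem exists_rearranges_avoids_1234 (hp : Bijective p) :
    ∃ q, Bijective q ∧ Rearranges p q ∧ Avoids q ![0, 1, 2, 3] := by
  classical
  obtain ⟨q, hq, hmax⟩ := Finset.exists_max_image {q | Bijective q ∧ Rearranges p q} toLex
    ⟨p, Finset.mem_filter.2 ⟨Finset.mem_univ _, hp, Rearranges.refl p⟩⟩
  simp only [Finset.mem_filter, Finset.mem_univ, true_and] at hq hmax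
  refine ⟨q, hq.1, hq.2, fun hcon => ?_⟩
  obtain ⟨c, d, hcd, hc, hcd'⟩ := contains_1234_iff.1 hcon
  have hlt : toLex q < toLex (q ∘ Equiv.swap c d) := by
    simpa [comp_def] using Pi.lex_desc (f := q ∘ Equiv.swap c d) hcd.le (by simpa using hcd')
  exact hlt.not_ge (hmax _ ⟨hq.1.comp (Equiv.bijective _),
    hq.2.comp_swap hcd.le hc (hc.mono le_rfl hcd'.le)⟩)

theorem not_toLex_lt_of_avoids_1234 (hp : Surjective p) (hq : Injective q) (h : Rearranges p q)
    (hav : Avoids p ![0, 1, 2, 3]) : ¬ toLex p < toLex q := by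
  rintro ⟨c, hagree, hlt⟩
  simp only [Pi.toLex_apply] at hagree hlt
  have hc : HighRank p c := by_contra fun hc => hlt.ne' (h.eq_of_not_highRank c hc)
  obtain ⟨e, he⟩ := hp (q c)
  rcases lt_trichotomy e c with hec | rfl | hce
  · exact hec.ne (hq ((hagree e hec).symm.trans he))
  · exact hlt.ne he
  · exact hav (contains_1234_iff.2 ⟨c, e, hce, hc, he ▸ hlt⟩)

theorem not_toLex_lt_of_avoids_1243 (hp : Surjective p) (hq : Injective q) (h : Rearranges q p)
    (hav : Avoids p ![0, 1, 3, 2]) : ¬ toLex q < toLex p := by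
  rintro ⟨c, hagree, hlt⟩
  simp only [Pi.toLex_apply] at hagree hlt
  have hc : HighRank q c := by_contra fun hc => hlt.ne' (h.eq_of_not_highRank c hc)
  obtain ⟨e, he⟩ := hp (q c)
  rcases lt_trichotomy e c with hec | rfl | hce
  · exact hec.ne (hq ((hagree e hec).trans he))
  · exact hlt.ne he.symm
  · exact hav (contains_1243_iff.2 ⟨c, e, hce, he ▸ hlt, he ▸ h.ascentBelow_iff.2 hc⟩)

theorem eq_of_rearranges_of_avoids_1234 {r : Fin m → Fin m} (hp : Rearranges r p)
    (hq : Rearranges r q) (hpb : Bijective p) (hqb : Bijective q)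
    (hpa : Avoids p ![0, 1, 2, 3]) (hqa : Avoids q ![0, 1, 2, 3]) : p = q := by
  have hpq := hp.symm.trans hq
  by_contra hne
  rcases lt_or_gt_of_ne (toLex.injective.ne hne) with hlt | hlt
  · exact not_toLex_lt_of_avoids_1234 hpb.2 hqb.1 hpq hpa hlt
  · exact not_toLex_lt_of_avoids_1234 hqb.2 hpb.1 hpq.symm hqa hlt

theorem eq_of_rearranges_of_avoids_1243 {r : Fin m → Fin m} (hp : Rearranges r p)
    (hq : Rearranges r q) (hpb : Bijective p) (hqb : Bijective q)
    (hpa : Avoids p ![0, 1, 3, 2]) (hqa : Avoids q ![0, 1, 3, 2]) : p = q := by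
  have hpq := hp.symm.trans hq
  by_contra hne
  rcases lt_or_gt_of_ne (toLex.injective.ne hne) with hlt | hlt
  · exact not_toLex_lt_of_avoids_1243 hqb.2 hpb.1 hpq hqa hlt
  · exact not_toLex_lt_of_avoids_1243 hpb.2 hqb.1 hpq.symm hpa hlt

theorem Alternating.apply_lt_apply_iff (h : Alternating p) {i j : Fin m} (hij : j.1 = i.1 + 1) :
    p i < p j ↔ i.1 % 2 = 0 := by
  obtain ⟨i, hi⟩ := i
  obtain ⟨j, hj⟩ := j
  subst hij
  exact h i hj

theorem HighRank.ascentBelow_of_succ {i j : Fin m} (h : HighRank p j) (hij : j.1 = i.1 + 1)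
    (hji : p j < p i) : AscentBelow p i (p j) := by
  obtain ⟨a, b, hab, hbj, h₁, h₂⟩ := h
  have hbi : b < i := by
    refine lt_of_le_of_ne (Fin.le_def.2 (by rw [Fin.lt_def] at hbj; omega)) ?_
    rintro rfl
    exact (h₂.trans hji).false
  exact ⟨a, b, hab, hbi, h₁, h₂⟩

theorem highRank_odd_of_avoids_1234 {n : ℕ} {p : Fin (2 * n) → Fin (2 * n)}
    (halt : Alternating p) (hav : Avoids p ![0, 1, 2, 3]) {i : Fin (2 * n)} (hi : HighRank p i) :
    i.1 % 2 = 1 := by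
  by_contra hpar
  have h : i.1 + 1 < 2 * n := by omega
  exact hav (contains_1234_iff.2 ⟨i, ⟨i.1 + 1, h⟩, Fin.lt_def.2 i.1.lt_succ_self, hi,
    (Alternating.apply_lt_apply_iff halt rfl).2 (by omega)⟩)

theorem highRank_odd_of_avoids_1243 (hp : Injective p) (halt : Alternating p)
    (hav : Avoids p ![0, 1, 3, 2]) {i : Fin m} (hi : HighRank p i) : i.1 % 2 = 1 := by
  by_contra hpar
  have hi0 : 0 < i.1 := let ⟨_, _, _, hbi, _⟩ := hi; (Nat.zero_le _).trans_lt hbi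
  set j : Fin m := ⟨i.1 - 1, by omega⟩
  have hji : i.1 = j.1 + 1 := by simp only [j]; omega
  have hdesc : p i < p j := lt_of_le_of_ne (not_lt.1 fun h =>
      by have := (Alternating.apply_lt_apply_iff halt hji).1 h; omega)
    (hp.ne (Fin.ne_of_val_ne (by omega)))
  exact hav (contains_1243_iff.2 ⟨j, i, Fin.lt_def.2 (by omega), hdesc,
    hi.ascentBelow_of_succ hji hdesc⟩)

theorem Rearranges.alternating (h : Rearranges p q) (hq : Injective q)
    (hodd : ∀ i, HighRank p i → i.1 % 2 = 1) (halt : Alternating p) : Alternating q := by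
  intro k hk
  set i : Fin m := ⟨k, by omega⟩
  set j : Fin m := ⟨k + 1, hk⟩
  have hik : i.1 = k := rfl
  have hij : j.1 = i.1 + 1 := rfl
  have hlow : ∀ l : Fin m, l.1 % 2 = 0 → q l = p l ∧ ¬ HighRank p l := fun l hl =>
    have hl' : ¬ HighRank p l := fun hp => by have := hodd l hp; omega
    ⟨h.eq_of_not_highRank l hl', hl'⟩
  rw [← Alternating.apply_lt_apply_iff halt hij]
  rcases Nat.mod_two_eq_zero_or_one k with hk2 | hk2
  · obtain ⟨hqi, hi⟩ := hlow i hk2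
    rw [hqi]
    by_cases hj : HighRank p j
    · refine iff_of_true (not_le.1 fun hji => hi ?_)
        ((Alternating.apply_lt_apply_iff halt hij).2 hk2)
      have hji' : q j < q i := lt_of_le_of_ne (hqi ▸ hji) (hq.ne (Fin.ne_of_val_ne (by omega)))
      exact (h.highRank_iff i).1
        (((h.highRank j hj).ascentBelow_of_succ hij hji').mono le_rfl hji'.le)
    · rw [h.eq_of_not_highRank j hj]
  · obtain ⟨hqj, hj⟩ := hlow j (by omega)
    rw [hqj]
    by_cases hi : HighRank p i
    · refine iff_of_false (fun hlt => hj ((h.highRank_iff j).1 ?_))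
        fun hlt => by have := (Alternating.apply_lt_apply_iff halt hij).1 hlt; omega
      exact (h.highRank i hi).mono (Fin.le_def.2 (by omega)) (hqj ▸ hlt).le
    · rw [h.eq_of_not_highRank i hi]

theorem card_le_card_of_rearranges {P Q : (Fin m → Fin m) → Prop}
    (hex : ∀ p, P p → ∃ q, Q q ∧ Rearranges p q)
    (huniq : ∀ r p q, Rearranges r p → Rearranges r q → P p → P q → p = q) :
    Nat.card {p // P p} ≤ Nat.card {q // Q q} := by
  choose f hf using hex
  refine Nat.card_le_card_of_injective (fun p => ⟨f p.1 p.2, (hf p.1 p.2).1⟩)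
    fun p p' hpp' => Subtype.ext ?_
  have hf' : f p.1 p.2 = f p'.1 p'.2 := congrArg Subtype.val hpp'
  exact huniq _ _ _ (hf p.1 p.2).2.symm (hf' ▸ (hf p'.1 p'.2).2.symm) p.2 p'.2

end PatternAvoidance

open PatternAvoidance

theorem stmt9_general (n : ℕ) :
    Nat.card {p : Fin (2 * n) → Fin (2 * n) // Function.Bijective p ∧ Alternating p ∧
      Avoids p (![0, 1, 2, 3] : Fin 4 → Fin 4)} =
    Nat.card {p : Fin (2 * n) → Fin (2 * n) // Function.Bijective p ∧ Alternating p ∧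
      Avoids p (![0, 1, 3, 2] : Fin 4 → Fin 4)} := by
  refine le_antisymm (card_le_card_of_rearranges ?_ ?_) (card_le_card_of_rearranges ?_ ?_)
  · rintro p ⟨hp, halt, hav⟩
    obtain ⟨q, hq, hpq, hqav⟩ := exists_rearranges_avoids_1243 hp
    exact ⟨q, ⟨hq, hpq.alternating hq.1 (fun _ => highRank_odd_of_avoids_1234 halt hav) halt,
      hqav⟩, hpq⟩
  · rintro r p q hp hq ⟨hpb, -, hpa⟩ ⟨hqb, -, hqa⟩
    exact eq_of_rearranges_of_avoids_1234 hp hq hpb hqb hpa hqa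
  · rintro p ⟨hp, halt, hav⟩
    obtain ⟨q, hq, hpq, hqav⟩ := exists_rearranges_avoids_1234 hp
    exact ⟨q, ⟨hq, hpq.alternating hq.1 (fun _ => highRank_odd_of_avoids_1243 hp.1 halt hav)
      halt, hqav⟩, hpq⟩
  · rintro r p q hp hq ⟨hpb, -, hpa⟩ ⟨hqb, -, hqa⟩
    exact eq_of_rearranges_of_avoids_1243 hp hq hpb hqb hpa hqa

theorem stmt9 (n : ℕ) (hn : 0 < n) :
    Nat.card {p : Fin (2 * n) → Fin (2 * n) // Function.Bijective p ∧ Alternating p ∧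
      Avoids p (![0, 1, 2, 3] : Fin 4 → Fin 4)} =
    Nat.card {p : Fin (2 * n) → Fin (2 * n) // Function.Bijective p ∧ Alternating p ∧
      Avoids p (![0, 1, 3, 2] : Fin 4 → Fin 4)} :=
  stmt9_general n
end

section
/- For every positive integer n, the number of alternating permutations of length 2n avoiding 12345 equals the number of alternating permutations of length 2n avoiding 12354. -/
/-!
Call an entry of a permutation *tall* if it ends an increasing subsequence of length four.
Moving the tall entries among the tall positions, so that each still lies above an increasing
triple of earlier entries, leaves the short entries and the set of tall positions unchanged; this
splits permutations into classes (`IsReshuffle`). A permutation contains 12345 iff some tall entry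
has a larger entry to its right, and contains 12354 iff some tall entry has a smaller one to its
right that still lies above a triple. So a class has exactly one 12345-avoider (minimise
`∑ k * w k` by swaps) and exactly one 12354-avoider (maximise it); two avoiders in one class are
compared at their first difference. In an alternating permutation of even length avoiding either
pattern no valley is tall, and then every member of its class is alternating.
-/

open Function

theorem card_subtype_eq_of_unique_in_class {α : Type*} {r : α → α → Prop} (hr : Equivalence r)
    {P Q : α → Prop} (hPQ : ∀ x, P x → ∃ y, r x y ∧ Q y) (hQP : ∀ y, Q y → ∃ x, r y x ∧ P x)
    (hP : ∀ x x', r x x' → P x → P x' → x = x') (hQ : ∀ y y', r y y' → Q y → Q y' → y = y') :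
    Nat.card {x // P x} = Nat.card {y // Q y} := by
  choose f hf using hPQ
  refine Nat.card_eq_of_bijective (fun x => ⟨f x.1 x.2, (hf x.1 x.2).2⟩) ⟨?_, ?_⟩
  · rintro ⟨x, hx⟩ ⟨x', hx'⟩ hxx'
    have hfx : f x hx = f x' hx' := congrArg Subtype.val hxx'
    exact Subtype.ext (hP x x' (hr.trans (hf x hx).1 (hfx ▸ hr.symm (hf x' hx').1)) hx hx')
  · rintro ⟨y, hy⟩
    obtain ⟨x, hyx, hx⟩ := hQP y hy
    exact ⟨⟨x, hx⟩, Subtype.ext (hQ y _ (hr.trans hyx (hf x hx).1) hy (hf x hx).2).symm⟩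

theorem contains_of_strictMono {n k : ℕ} {p : Fin n → Fin n} {q : Fin k → Fin k}
    (hq : Injective q) {f : Fin k → Fin n} (hf : StrictMono f)
    (h : ∀ a b, q a < q b → p (f a) < p (f b)) : Contains p q := by
  refine ⟨f, hf, fun a b => ⟨h a b, fun hab => ?_⟩⟩
  rcases lt_trichotomy (q a) (q b) with hlt | heq | hgt
  · exact hlt
  · exact absurd hab (hq heq ▸ lt_irrefl _)
  · exact absurd (h b a hgt) hab.asymm

variable {N : ℕ}

def Incr3Below (p : Fin N → Fin N) (i v : Fin N) : Prop :=
  ∃ a b c, a < b ∧ b < c ∧ c < i ∧ p a < p b ∧ p b < p c ∧ p c < v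

def EndsIncr4 (p : Fin N → Fin N) (i : Fin N) : Prop :=
  Incr3Below p i (p i)

theorem Incr3Below.mono {p : Fin N → Fin N} {i j v v' : Fin N} (h : Incr3Below p i v)
    (hij : i ≤ j) (hv : v ≤ v') : Incr3Below p j v' := by
  obtain ⟨a, b, c, hab, hbc, hci, pab, pbc, pcv⟩ := h
  exact ⟨a, b, c, hab, hbc, hci.trans_le hij, pab, pbc, pcv.trans_le hv⟩

theorem contains12345_iff {p : Fin N → Fin N} :
    Contains p (![0, 1, 2, 3, 4] : Fin 5 → Fin 5) ↔ ∃ i j, i < j ∧ p i < p j ∧ EndsIncr4 p i := by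
  constructor
  · rintro ⟨f, hf, hfp⟩
    exact ⟨f 3, f 4, hf (by decide), (hfp 3 4).mp (by decide), f 0, f 1, f 2, hf (by decide),
      hf (by decide), hf (by decide), (hfp 0 1).mp (by decide), (hfp 1 2).mp (by decide),
      (hfp 2 3).mp (by decide)⟩
  · rintro ⟨i, j, hij, pij, a, b, c, hab, hbc, hci, pab, pbc, pci⟩
    refine contains_of_strictMono (by decide) (f := ![a, b, c, i, j])
      (Fin.strictMono_iff_lt_succ.mpr fun x => by fin_cases x <;> simpa) fun x y => ?_
    fin_cases x <;> fin_cases y <;> simp <;> order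

theorem contains12354_iff {p : Fin N → Fin N} :
    Contains p (![0, 1, 2, 4, 3] : Fin 5 → Fin 5) ↔
      ∃ i j, i < j ∧ p j < p i ∧ Incr3Below p i (p j) := by
  constructor
  · rintro ⟨f, hf, hfp⟩
    exact ⟨f 3, f 4, hf (by decide), (hfp 4 3).mp (by decide), f 0, f 1, f 2, hf (by decide),
      hf (by decide), hf (by decide), (hfp 0 1).mp (by decide), (hfp 1 2).mp (by decide),
      (hfp 2 4).mp (by decide)⟩
  · rintro ⟨i, j, hij, pji, a, b, c, hab, hbc, hci, pab, pbc, pcj⟩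
    refine contains_of_strictMono (by decide) (f := ![a, b, c, i, j])
      (Fin.strictMono_iff_lt_succ.mpr fun x => by fin_cases x <;> simpa) fun x y => ?_
    fin_cases x <;> fin_cases y <;> simp <;> order

structure IsReshuffle (p w : Fin N → Fin N) : Prop where
  exists_perm : ∃ σ : Equiv.Perm (Fin N), w = p ∘ σ
  apply_eq : ∀ i, ¬ EndsIncr4 p i → w i = p i
  incr3Below : ∀ i, EndsIncr4 p i → Incr3Below p i (w i)

namespace IsReshuffle

variable {p w w' : Fin N → Fin N}

theorem incr3Below_iff (h : IsReshuffle p w) {i v : Fin N} :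
    Incr3Below w i v ↔ Incr3Below p i v := by
  constructor
  · rintro ⟨a, b, c, hab, hbc, hci, wab, wbc, wcv⟩
    have of_endsIncr4 : ∀ x, x < i → w x < v → EndsIncr4 p x → Incr3Below p i v :=
      fun x hxi hxv hx => (h.incr3Below x hx).mono hxi.le hxv.le
    by_cases hc : EndsIncr4 p c
    · exact of_endsIncr4 c hci wcv hc
    by_cases hb : EndsIncr4 p b
    · exact of_endsIncr4 b (hbc.trans hci) (wbc.trans wcv) hb
    by_cases ha : EndsIncr4 p a
    · exact of_endsIncr4 a (hab.trans (hbc.trans hci)) (wab.trans (wbc.trans wcv)) ha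
    simp only [h.apply_eq a ha, h.apply_eq b hb, h.apply_eq c hc] at wab wbc wcv
    exact ⟨a, b, c, hab, hbc, hci, wab, wbc, wcv⟩
  · intro hp
    -- a tall entry of `p` among `a, b, c` lies above a triple of `p` with a smaller top value
    induction v using WellFoundedLT.induction with
    | _ v ih =>
    obtain ⟨a, b, c, hab, hbc, hci, pab, pbc, pcv⟩ := hp
    have of_endsIncr4 : ∀ x, x < i → p x < v → EndsIncr4 p x → Incr3Below w i v :=
      fun x hxi hxv hx => (ih (p x) hxv (hx.mono hxi.le le_rfl)).mono le_rfl hxv.le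
    by_cases hc : EndsIncr4 p c
    · exact of_endsIncr4 c hci pcv hc
    by_cases hb : EndsIncr4 p b
    · exact of_endsIncr4 b (hbc.trans hci) (pbc.trans pcv) hb
    by_cases ha : EndsIncr4 p a
    · exact of_endsIncr4 a (hab.trans (hbc.trans hci)) (pab.trans (pbc.trans pcv)) ha
    simp only [← h.apply_eq a ha, ← h.apply_eq b hb, ← h.apply_eq c hc] at pab pbc pcv
    exact ⟨a, b, c, hab, hbc, hci, pab, pbc, pcv⟩

theorem endsIncr4_iff (h : IsReshuffle p w) {i : Fin N} : EndsIncr4 w i ↔ EndsIncr4 p i := by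
  by_cases hi : EndsIncr4 p i
  · exact iff_of_true (h.incr3Below_iff.mpr (h.incr3Below i hi)) hi
  · rw [EndsIncr4, h.incr3Below_iff, h.apply_eq i hi]
    rfl

theorem symm (h : IsReshuffle p w) : IsReshuffle w p where
  exists_perm := by
    obtain ⟨σ, rfl⟩ := h.exists_perm
    exact ⟨σ⁻¹, by ext; simp⟩
  apply_eq i hi := (h.apply_eq i (mt h.endsIncr4_iff.mpr hi)).symm
  incr3Below i hi := h.incr3Below_iff.mpr (h.endsIncr4_iff.mp hi)

theorem trans (h : IsReshuffle p w) (h' : IsReshuffle w w') : IsReshuffle p w' where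
  exists_perm := by
    obtain ⟨σ, rfl⟩ := h.exists_perm
    obtain ⟨τ, rfl⟩ := h'.exists_perm
    exact ⟨σ * τ, rfl⟩
  apply_eq i hi := (h'.apply_eq i (mt h.endsIncr4_iff.mp hi)).trans (h.apply_eq i hi)
  incr3Below i hi := h.incr3Below_iff.mp (h'.incr3Below i (h.endsIncr4_iff.mpr hi))

theorem equivalence : Equivalence (@IsReshuffle N) :=
  ⟨fun _ => ⟨⟨1, rfl⟩, fun _ _ => rfl, fun _ hi => hi⟩, symm, trans⟩

theorem injective (h : IsReshuffle p w) (hp : Injective p) : Injective w := by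
  obtain ⟨σ, rfl⟩ := h.exists_perm
  exact hp.comp σ.injective

theorem bijective (h : IsReshuffle p w) (hp : Bijective p) : Bijective w := by
  obtain ⟨σ, rfl⟩ := h.exists_perm
  exact hp.comp σ.bijective

theorem comp_swap {i j : Fin N} (hij : i < j) (hi : EndsIncr4 w i) (hj : Incr3Below w i (w j)) :
    IsReshuffle w (w ∘ Equiv.swap i j) where
  exists_perm := ⟨_, rfl⟩
  apply_eq k hk := by
    have hki : k ≠ i := fun hki => hk (hki ▸ hi)
    have hkj : k ≠ j := fun hkj => hk (hkj ▸ hj.mono hij.le le_rfl)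
    simp [Equiv.swap_apply_of_ne_of_ne hki hkj]
  incr3Below k hk := by
    rcases eq_or_ne k i with rfl | hki
    · simpa using hj
    rcases eq_or_ne k j with rfl | hkj
    · simpa using hi.mono hij.le le_rfl
    rw [comp_apply, Equiv.swap_apply_of_ne_of_ne hki hkj]
    exact hk

end IsReshuffle

def weightedSum (w : Fin N → Fin N) : ℕ :=
  ∑ k : Fin N, (k : ℕ) * (w k : ℕ)

theorem weightedSum_comp_swap_lt {w : Fin N → Fin N} {i j : Fin N} (hij : i < j) (hw : w i < w j) :
    weightedSum (w ∘ Equiv.swap i j) < weightedSum w := by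
  have hji : j ∈ Finset.univ.erase i := Finset.mem_erase.mpr ⟨hij.ne', Finset.mem_univ j⟩
  unfold weightedSum
  rw [← Finset.add_sum_erase _ _ (Finset.mem_univ i), ← Finset.add_sum_erase _ _ hji,
    ← Finset.add_sum_erase _ _ (Finset.mem_univ i), ← Finset.add_sum_erase _ _ hji]
  have hrest : ∑ k ∈ (Finset.univ.erase i).erase j, (k : ℕ) * (w (Equiv.swap i j k) : ℕ) =
      ∑ k ∈ (Finset.univ.erase i).erase j, (k : ℕ) * (w k : ℕ) := by
    refine Finset.sum_congr rfl fun k hk => ?_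
    simp only [Finset.mem_erase] at hk
    rw [Equiv.swap_apply_of_ne_of_ne hk.2.1 hk.1]
  simp only [comp_apply, Equiv.swap_apply_left, Equiv.swap_apply_right, hrest]
  have := Fin.lt_def.mp hij
  have := Fin.lt_def.mp hw
  nlinarith

theorem exists_isReshuffle_avoids12345 (p : Fin N → Fin N) :
    ∃ w, IsReshuffle p w ∧ Avoids w (![0, 1, 2, 3, 4] : Fin 5 → Fin 5) := by
  obtain ⟨w, hw, hmin⟩ := Set.exists_min_image {w | IsReshuffle p w} weightedSum
    (Set.toFinite _) ⟨p, IsReshuffle.equivalence.refl p⟩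
  refine ⟨w, hw, fun hA => ?_⟩
  obtain ⟨i, j, hij, hlt, hi⟩ := contains12345_iff.mp hA
  have hswap := hw.trans (IsReshuffle.comp_swap hij hi (hi.mono le_rfl hlt.le))
  exact (hmin _ hswap).not_gt (weightedSum_comp_swap_lt hij hlt)

theorem exists_isReshuffle_avoids12354 (p : Fin N → Fin N) :
    ∃ w, IsReshuffle p w ∧ Avoids w (![0, 1, 2, 4, 3] : Fin 5 → Fin 5) := by
  obtain ⟨w, hw, hmax⟩ := Set.exists_max_image {w | IsReshuffle p w} weightedSum
    (Set.toFinite _) ⟨p, IsReshuffle.equivalence.refl p⟩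
  refine ⟨w, hw, fun hB => ?_⟩
  obtain ⟨i, j, hij, hlt, hj⟩ := contains12354_iff.mp hB
  have hswap := hw.trans (IsReshuffle.comp_swap hij (hj.mono le_rfl hlt.le) hj)
  have hback : (w ∘ Equiv.swap i j) ∘ Equiv.swap i j = w := by ext; simp
  refine (hmax _ hswap).not_gt ?_
  simpa [hback] using weightedSum_comp_swap_lt (w := w ∘ Equiv.swap i j) hij (by simpa using hlt)

namespace IsReshuffle

variable {p w : Fin N → Fin N}

/-- At the first position `i` where `p` and `w` differ, the value `w i` occurs in `p` and `p i`
occurs in `w`, both strictly after `i`. -/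
theorem contains_of_toLex_lt (h : IsReshuffle p w) (hp : Injective p) (hlt : toLex p < toLex w) :
    Contains p (![0, 1, 2, 3, 4] : Fin 5 → Fin 5) ∧
      Contains w (![0, 1, 2, 4, 3] : Fin 5 → Fin 5) := by
  obtain ⟨i, hagree, hi⟩ := hlt
  obtain ⟨σ, hσ⟩ := h.exists_perm
  have hi4 : EndsIncr4 p i := by_contra fun hn => hi.ne (h.apply_eq i hn).symm
  have later : ∀ {f g : Fin N → Fin N}, Injective g → (∀ k < i, f k = g k) → f i ≠ g i →
      ∀ j, f j = g i → i < j := by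
    intro f g hg hfg hne j hj
    rcases lt_trichotomy j i with hji | rfl | hij
    · exact absurd (hg ((hfg j hji).symm.trans hj)) hji.ne
    · exact absurd hj hne
    · exact hij
  have hpσ : p (σ i) = w i := by rw [hσ]; rfl
  have hwσ : w (σ⁻¹ i) = p i := by rw [hσ]; simp
  refine ⟨contains12345_iff.mpr ⟨i, σ i, ?_, hpσ ▸ hi, hi4⟩,
    contains12354_iff.mpr ⟨i, σ⁻¹ i, ?_, hwσ ▸ hi, hwσ ▸ h.incr3Below_iff.mpr hi4⟩⟩
  · exact later (h.injective hp) hagree hi.ne _ hpσ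
  · exact later hp (fun k hk => (hagree k hk).symm) hi.ne' _ hwσ

theorem eq_of_avoids12345 (h : IsReshuffle p w) (hp : Injective p)
    (hpA : Avoids p (![0, 1, 2, 3, 4] : Fin 5 → Fin 5))
    (hwA : Avoids w (![0, 1, 2, 3, 4] : Fin 5 → Fin 5)) : p = w := by
  rcases lt_trichotomy (toLex p) (toLex w) with hlt | heq | hgt
  · exact absurd (h.contains_of_toLex_lt hp hlt).1 hpA
  · exact heq
  · exact absurd (h.symm.contains_of_toLex_lt (h.injective hp) hgt).1 hwA

theorem eq_of_avoids12354 (h : IsReshuffle p w) (hp : Injective p)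
    (hpB : Avoids p (![0, 1, 2, 4, 3] : Fin 5 → Fin 5))
    (hwB : Avoids w (![0, 1, 2, 4, 3] : Fin 5 → Fin 5)) : p = w := by
  rcases lt_trichotomy (toLex p) (toLex w) with hlt | heq | hgt
  · exact absurd (h.contains_of_toLex_lt hp hlt).2 hwB
  · exact heq
  · exact absurd (h.symm.contains_of_toLex_lt (h.injective hp) hgt).2 hpB

theorem apply_lt_apply_of_le_succ (h : IsReshuffle p w) (hp : Injective p) {e x : Fin N}
    (he : ¬ EndsIncr4 p e) (hxe : x ≠ e) (hx : (x : ℕ) ≤ e + 1) (hlt : p e < p x) :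
    w e < w x := by
  rw [h.apply_eq e he]
  by_cases hx4 : EndsIncr4 p x
  · obtain ⟨a, b, c, hab, hbc, hcx, pab, pbc, pcx⟩ := h.incr3Below x hx4
    refine lt_of_le_of_ne (not_lt.mp fun hwx => he ?_)
      ((h.apply_eq e he) ▸ (h.injective hp).ne hxe.symm)
    have hce : c < e := by
      have := Fin.lt_def.mp hcx
      have := Fin.lt_def.mp (pcx.trans hwx)
      have : c ≠ e := fun hce => by subst hce; exact lt_irrefl _ (pcx.trans hwx)
      omega
    exact ⟨a, b, c, hab, hbc, hce, pab, pbc, pcx.trans hwx⟩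
  · rwa [h.apply_eq x hx4]

end IsReshuffle

namespace Alternating

variable {p w : Fin N → Fin N}

theorem apply_succ_lt (halt : Alternating p) (hp : Injective p) {i j : Fin N}
    (hij : (j : ℕ) = i + 1) (hi : (i : ℕ) % 2 = 1) : p j < p i := by
  obtain ⟨j, hjN⟩ := j
  obtain rfl : j = i + 1 := hij
  refine lt_of_le_of_ne (not_lt.mp fun hlt => ?_) (hp.ne (Fin.ne_of_val_ne (by simp)))
  have := (halt i hjN).mp hlt
  omega

theorem not_endsIncr4_of_avoids12345 (halt : Alternating p) (hN : Even N)
    (hA : Avoids p (![0, 1, 2, 3, 4] : Fin 5 → Fin 5)) {i : Fin N} (hi : (i : ℕ) % 2 = 0) :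
    ¬ EndsIncr4 p i := fun hi4 => by
  have hsucc : (i : ℕ) + 1 < N := by
    obtain ⟨m, hm⟩ := hN
    omega
  exact hA (contains12345_iff.mpr ⟨i, ⟨i + 1, hsucc⟩, Fin.lt_def.mpr (by simp),
    (halt i hsucc).mpr hi, hi4⟩)

theorem not_endsIncr4_of_avoids12354 (halt : Alternating p) (hp : Injective p)
    (hB : Avoids p (![0, 1, 2, 4, 3] : Fin 5 → Fin 5)) {i : Fin N} (hi : (i : ℕ) % 2 = 0) :
    ¬ EndsIncr4 p i := by
  rintro ⟨a, b, c, hab, hbc, hci, pab, pbc, pci⟩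
  have := Fin.lt_def.mp hab
  have := Fin.lt_def.mp hbc
  have := Fin.lt_def.mp hci
  let i' : Fin N := ⟨i - 1, by omega⟩
  have hi' : (i' : ℕ) + 1 = i := Nat.sub_add_cancel (by omega)
  have hdesc : p i < p i' := halt.apply_succ_lt hp hi'.symm (by omega)
  have hci' : c < i' := by
    have : (c : ℕ) ≠ i' := Fin.val_injective.ne fun hc => (pci.trans hdesc).ne (hc ▸ rfl)
    exact Fin.lt_def.mpr (by omega)
  exact hB (contains12354_iff.mpr ⟨i', i, Fin.lt_def.mpr (by omega), hdesc,
    a, b, c, hab, hbc, hci', pab, pbc, pci⟩)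

-- With 0-based positions, the valleys of an alternating permutation are its even positions.
theorem of_isReshuffle (halt : Alternating p) (hp : Injective p)
    (hvalley : ∀ i : Fin N, (i : ℕ) % 2 = 0 → ¬ EndsIncr4 p i) (h : IsReshuffle p w) :
    Alternating w := by
  intro k hk
  rcases Nat.mod_two_eq_zero_or_one k with hk2 | hk2
  · simp only [hk2, iff_true]
    exact h.apply_lt_apply_of_le_succ hp (hvalley _ hk2) (Fin.ne_of_val_ne (by simp)) le_rfl
      ((halt k hk).mpr hk2)
  · simp only [hk2, one_ne_zero, iff_false, not_lt]
    exact (h.apply_lt_apply_of_le_succ hp (e := ⟨k + 1, hk⟩) (x := ⟨k, by omega⟩)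
      (hvalley _ (by simp; omega)) (Fin.ne_of_val_ne (by simp)) (by simp; omega)
      (halt.apply_succ_lt hp rfl hk2)).le

end Alternating

theorem stmt10_general (n : ℕ) :
    Nat.card {p : Fin (2 * n) → Fin (2 * n) // Function.Bijective p ∧ Alternating p ∧
      Avoids p (![0, 1, 2, 3, 4] : Fin 5 → Fin 5)} =
    Nat.card {p : Fin (2 * n) → Fin (2 * n) // Function.Bijective p ∧ Alternating p ∧
      Avoids p (![0, 1, 2, 4, 3] : Fin 5 → Fin 5)} := by
  have hN : Even (2 * n) := even_two_mul n
  refine card_subtype_eq_of_unique_in_class IsReshuffle.equivalence ?_ ?_ ?_ ?_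
  · rintro p ⟨hp, halt, hA⟩
    obtain ⟨w, hw, hB⟩ := exists_isReshuffle_avoids12354 p
    exact ⟨w, hw, hw.bijective hp,
      halt.of_isReshuffle hp.1 (fun _ => halt.not_endsIncr4_of_avoids12345 hN hA) hw, hB⟩
  · rintro p ⟨hp, halt, hB⟩
    obtain ⟨w, hw, hA⟩ := exists_isReshuffle_avoids12345 p
    exact ⟨w, hw, hw.bijective hp,
      halt.of_isReshuffle hp.1 (fun _ => halt.not_endsIncr4_of_avoids12354 hp.1 hB) hw, hA⟩
  · rintro p w h ⟨hp, -, hpA⟩ ⟨-, -, hwA⟩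
    exact h.eq_of_avoids12345 hp.1 hpA hwA
  · rintro p w h ⟨hp, -, hpB⟩ ⟨-, -, hwB⟩
    exact h.eq_of_avoids12354 hp.1 hpB hwB

theorem stmt10 (n : ℕ) (hn : 0 < n) :
    Nat.card {p : Fin (2 * n) → Fin (2 * n) // Function.Bijective p ∧ Alternating p ∧
      Avoids p (![0, 1, 2, 3, 4] : Fin 5 → Fin 5)} =
    Nat.card {p : Fin (2 * n) → Fin (2 * n) // Function.Bijective p ∧ Alternating p ∧
      Avoids p (![0, 1, 2, 4, 3] : Fin 5 → Fin 5)} :=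
  stmt10_general n
end
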